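/- The impartial game {*3; {*2}} — whose two options are nim 3 and the game {*2} with unique option nim 2 — is misère-indistinguishable from the disjunctive sum nim 1 + {*2}. Consequently, nim 3 + {*3; {*2}} is misère-indistinguishable from nim 2 + {*2}. -/

import Mathlib

/-! Misère indistinguishability is a congruence for the disjunctive sum, and Conway's
simplification applies up to it: an option of `H` may be discarded when it has an option
indistinguishable from `G`. Thus `*1 + *1 ≡ 0`; `*3 ≡ *1 + *2` by matching options; and
`*3 + *1 ≡ *2`, since its options `*2 + *1` and `*3` reverse through `*2`. Matching options once
more gives `{*3; {*2}} ≡ *1 + {*2}`, and adding `*3` to both sides and using `*3 + *1 ≡ *2`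
gives the second claim. -/

/-- An impartial game: a position is given by the list of its options
(the positions reachable in one move); both players have the same moves. -/
inductive Game : Type
  | node : List Game → Game

namespace Game

/-- The options of a position. -/
def options : Game → List Game
  | node l => l

/-- Disjunctive sum of two games: a move is made in exactly one component. -/
def add : Game → Game → Game
  | node l, node r =>
      node ((l.attach.map fun x => add x.1 (node r)) ++
            (r.attach.map fun y => add (node l) y.1))
termination_by g h => sizeOf g + sizeOf h
decreasing_by
  · have := List.sizeOf_lt_of_mem x.2; simp_wf; (try simp only [Game.node.sizeOf_spec] at *); omega
  · have := List.sizeOf_lt_of_mem y.2; simp_wf; (try simp only [Game.node.sizeOf_spec] at *); omega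

/-- Misère win (for the player to move): the game has no options,
or some option is a misère loss. -/
def MisereWin : Game → Prop
  | node l => l = [] ∨ ∃ x : {a // a ∈ l}, ¬ MisereWin x.1
decreasing_by
  simp_wf; have := List.sizeOf_lt_of_mem x.2; omega

/-- Misère indistinguishability: adding any game `T` yields the same misère outcome. -/
def Indist (G H : Game) : Prop :=
  ∀ T : Game, MisereWin (add G T) ↔ MisereWin (add H T)

/-- The Nim-heap of size `n`, whose options are `nim 0, …, nim (n-1)`. -/
def nim : ℕ → Game
  | 0 => node []
  | n + 1 => node ((nim n).options ++ [nim n])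

/-- Normal-play win (for the player to move): some option is a normal-play loss.
A player unable to move loses. -/
def NormalWin : Game → Prop
  | node l => ∃ x : {a // a ∈ l}, ¬ NormalWin x.1
decreasing_by
  simp_wf; have := List.sizeOf_lt_of_mem x.2; omega

/-- The Grundy value: the mex of the Grundy values of the options. -/
noncomputable def grundy : Game → ℕ
  | node l => sInf {n : ℕ | ∀ x : {a // a ∈ l}, grundy x.1 ≠ n}
decreasing_by
  simp_wf; have := List.sizeOf_lt_of_mem x.2; omega

/-- The height of a game: the maximal number of moves in a play from it. -/
def height : Game → ℕ
  | node l => (l.attach.map fun x => height x.1 + 1).foldr max 0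
decreasing_by
  simp_wf; have := List.sizeOf_lt_of_mem x.2; omega

/-- A canonical tree: duplicate options are removed, hereditarily. -/
def Canonical : Game → Prop
  | node l => l.Nodup ∧ ∀ x : {a // a ∈ l}, Canonical x.1
decreasing_by
  simp_wf; have := List.sizeOf_lt_of_mem x.2; omega

/-- Extensional (set-theoretic) equality of game trees. -/
def ExtEq : Game → Game → Prop
  | node l, node r =>
      (∀ x : {a // a ∈ l}, ∃ y : {b // b ∈ r}, ExtEq x.1 y.1) ∧
      (∀ y : {b // b ∈ r}, ∃ x : {a // a ∈ l}, ExtEq x.1 y.1)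
termination_by g _ => sizeOf g
decreasing_by
  · have := List.sizeOf_lt_of_mem x.2; simp_wf; (try simp only [Game.node.sizeOf_spec] at *); omega
  · have := List.sizeOf_lt_of_mem x.2; simp_wf; (try simp only [Game.node.sizeOf_spec] at *); omega

/-- The disjunctive sum of `n` copies of a game. -/
def copies : ℕ → Game → Game
  | 0, _ => node []
  | n + 1, g => add g (copies n g)

/-- `G` is a reducer of `H` if `H` is obtained from `G` by adding reversible
moves `R₁, R₂, …`: the options of `H` are those of `G` together with the `Rⱼ`,
each `Rⱼ` having `G` among its options; when `G` is empty one additionally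
requires `H` to be a misère win. -/
def Reducer (G H : Game) : Prop :=
  ∃ Rs : List Game,
    (∀ x, x ∈ H.options ↔ x ∈ G.options ∨ x ∈ Rs) ∧
    (∀ R ∈ Rs, G ∈ R.options) ∧
    (G.options = [] → MisereWin H)

/-- A canonical tree is reduced if its only reducer is itself (as a set of
options) and all of its options are reduced. -/
def Reduced : Game → Prop
  | node l =>
      (∀ G, Reducer G (node l) → ∀ x, x ∈ G.options ↔ x ∈ l) ∧
      ∀ x : {a // a ∈ l}, Reduced x.1
decreasing_by
  simp_wf; have := List.sizeOf_lt_of_mem x.2; omega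

end Game

namespace Game

@[simp] theorem options_node (l : List Game) : (node l).options = l := rfl

@[simp] theorem nim_zero : nim 0 = node [] := rfl

theorem eq_of_options_eq : ∀ {g h : Game}, g.options = h.options → g = h
  | node _, node _, rfl => rfl

theorem option_induction {motive : Game → Prop}
    (ih : ∀ g, (∀ x ∈ g.options, motive x) → motive g) : ∀ g, motive g
  | node l => ih (node l) fun x _ => option_induction ih x

theorem options_add (g h : Game) :
    (add g h).options = g.options.map (add · h) ++ h.options.map (add g ·) := by
  cases g; cases h
  rw [add]
  simp

theorem mem_options_add {g h z : Game} :
    z ∈ (add g h).options ↔ (∃ x ∈ g.options, add x h = z) ∨ ∃ y ∈ h.options, add g y = z := by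
  simp [options_add]

theorem add_mem_options_add_left {g x : Game} (hx : x ∈ g.options) (h : Game) :
    add x h ∈ (add g h).options :=
  mem_options_add.2 (.inl ⟨x, hx, rfl⟩)

theorem add_mem_options_add_right (g : Game) {h y : Game} (hy : y ∈ h.options) :
    add g y ∈ (add g h).options :=
  mem_options_add.2 (.inr ⟨y, hy, rfl⟩)

@[simp] theorem add_zero (g : Game) : add g (node []) = g := by
  induction g using option_induction with
  | ih g ih =>
    apply eq_of_options_eq
    simpa [options_add] using List.map_congr_left ih |>.trans (List.map_id _)

@[simp] theorem zero_add (g : Game) : add (node []) g = g := by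
  induction g using option_induction with
  | ih g ih =>
    apply eq_of_options_eq
    simpa [options_add] using List.map_congr_left ih |>.trans (List.map_id _)

theorem add_assoc (a b c : Game) : add (add a b) c = add a (add b c) := by
  induction a using option_induction generalizing b c with
  | ih a iha =>
  induction b using option_induction generalizing c with
  | ih b ihb =>
  induction c using option_induction with
  | ih c ihc =>
  apply eq_of_options_eq
  simp only [options_add, List.map_append, List.map_map, List.append_assoc]
  congr 1
  · exact List.map_congr_left fun x hx => iha x hx b c
  congr 1
  · exact List.map_congr_left fun y hy => ihb y hy c
  · exact List.map_congr_left fun z hz => ihc z hz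

theorem mem_options_nim {n : ℕ} {x : Game} : x ∈ (nim n).options ↔ ∃ k < n, nim k = x := by
  induction n with
  | zero => simp
  | succ n ih =>
    simp [nim, ih, le_iff_lt_or_eq, or_and_right, exists_or, eq_comm]

theorem nim_mem_options_nim {k n : ℕ} (h : k < n) : nim k ∈ (nim n).options :=
  mem_options_nim.2 ⟨k, h, rfl⟩

theorem misereWin_iff (g : Game) :
    MisereWin g ↔ g.options = [] ∨ ∃ x ∈ g.options, ¬ MisereWin x := by
  cases g
  rw [MisereWin]
  simp

theorem misereWin_of_options_eq_nil {g : Game} (h : g.options = []) : MisereWin g :=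
  (misereWin_iff g).2 (.inl h)

@[simp] theorem misereWin_node_nil : MisereWin (node []) := misereWin_of_options_eq_nil rfl

theorem misereWin_of_mem_options {g x : Game} (hx : x ∈ g.options) (h : ¬ MisereWin x) :
    MisereWin g :=
  (misereWin_iff g).2 (.inr ⟨x, hx, h⟩)

theorem misereWin_option_of_not_misereWin {g x : Game} (hg : ¬ MisereWin g) (hx : x ∈ g.options) :
    MisereWin x :=
  not_not.1 fun h => hg (misereWin_of_mem_options hx h)

theorem Indist.refl (g : Game) : Indist g g := fun _ => Iff.rfl

theorem Indist.symm {g h : Game} (hgh : Indist g h) : Indist h g := fun T => (hgh T).symm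

theorem Indist.trans {g h k : Game} (hgh : Indist g h) (hhk : Indist h k) : Indist g k :=
  fun T => (hgh T).trans (hhk T)

/-- Conway's misère simplification: options of `H` that reverse through `G` may be deleted. -/
theorem indist_of_reversible {G H : Game}
    (hG : ∀ x ∈ G.options, ∃ y ∈ H.options, Indist x y)
    (hH : ∀ y ∈ H.options, (∃ x ∈ G.options, Indist x y) ∨ ∃ z ∈ y.options, Indist z G)
    (hnil : G.options = [] → MisereWin H) : Indist G H := by
  intro T
  induction T using option_induction with
  | ih T ihT =>
  constructor
  · rw [misereWin_iff, options_add]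
    simp only [List.append_eq_nil_iff, List.map_eq_nil_iff, List.mem_append, List.mem_map]
    rintro (⟨hGnil, hTnil⟩ | ⟨_, (⟨x, hx, rfl⟩ | ⟨t, ht, rfl⟩), hlose⟩)
    · obtain rfl : T = node [] := eq_of_options_eq hTnil
      simpa using hnil hGnil
    · obtain ⟨y, hy, hxy⟩ := hG x hx
      exact misereWin_of_mem_options (add_mem_options_add_left hy T) ((hxy T).not.1 hlose)
    · exact misereWin_of_mem_options (add_mem_options_add_right H ht) ((ihT t ht).not.1 hlose)
  · rw [misereWin_iff, options_add]
    simp only [List.append_eq_nil_iff, List.map_eq_nil_iff, List.mem_append, List.mem_map]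
    rintro (⟨hHnil, hTnil⟩ | ⟨_, (⟨y, hy, rfl⟩ | ⟨t, ht, rfl⟩), hlose⟩)
    · have hGnil : G.options = [] :=
        List.eq_nil_iff_forall_not_mem.2 fun x hx => by simpa [hHnil] using hG x hx
      exact misereWin_of_options_eq_nil (by simp [options_add, hGnil, hTnil])
    · rcases hH y hy with ⟨x, hx, hxy⟩ | ⟨z, hz, hzG⟩
      · exact misereWin_of_mem_options (add_mem_options_add_left hx T) ((hxy T).not.2 hlose)
      · exact (hzG T).1 (misereWin_option_of_not_misereWin hlose (add_mem_options_add_left hz T))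
    · exact misereWin_of_mem_options (add_mem_options_add_right G ht) ((ihT t ht).not.2 hlose)

theorem indist_add_comm (a b : Game) : Indist (add a b) (add b a) := by
  induction a using option_induction generalizing b with
  | ih a iha =>
  induction b using option_induction with
  | ih b ihb =>
  refine indist_of_reversible (fun x hx => ?_) (fun y hy => .inl ?_) fun h => ?_
  · rcases mem_options_add.1 hx with ⟨a', ha', rfl⟩ | ⟨b', hb', rfl⟩
    exacts [⟨_, add_mem_options_add_right b ha', iha a' ha' b⟩,
      ⟨_, add_mem_options_add_left hb' a, ihb b' hb'⟩]
  · rcases mem_options_add.1 hy with ⟨b', hb', rfl⟩ | ⟨a', ha', rfl⟩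
    exacts [⟨_, add_mem_options_add_right a hb', ihb b' hb'⟩,
      ⟨_, add_mem_options_add_left ha' b, iha a' ha' b⟩]
  · simp only [options_add, List.append_eq_nil_iff, List.map_eq_nil_iff] at h
    exact misereWin_of_options_eq_nil (by simp [options_add, h])

theorem Indist.add_right {g h : Game} (hgh : Indist g h) (k : Game) :
    Indist (add g k) (add h k) := fun T => by
  simpa only [add_assoc] using hgh (add k T)

theorem Indist.add_left {g h : Game} (hgh : Indist g h) (k : Game) :
    Indist (add k g) (add k h) :=
  (indist_add_comm k g).trans <| (hgh.add_right k).trans (indist_add_comm h k)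

theorem not_misereWin_nim_one : ¬ MisereWin (nim 1) := by
  rw [misereWin_iff]
  simp [nim]

theorem nim_one_add_nim_one_indist : Indist (add (nim 1) (nim 1)) (nim 0) := by
  refine .symm <| indist_of_reversible (by simp) (fun y hy => .inr ?_) fun _ => ?_
  · simp only [mem_options_add, mem_options_nim] at hy
    rcases hy with ⟨_, ⟨k, hk, rfl⟩, rfl⟩ | ⟨_, ⟨k, hk, rfl⟩, rfl⟩ <;> interval_cases k <;>
      exact ⟨nim 0, by simp [nim], .refl _⟩
  · exact misereWin_of_mem_options (add_mem_options_add_left (nim_mem_options_nim one_pos) _)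
      (by simpa using not_misereWin_nim_one)

theorem nim_three_add_nim_one_indist : Indist (add (nim 3) (nim 1)) (nim 2) := by
  refine .symm <| indist_of_reversible (fun x hx => ?_) (fun y hy => ?_) fun h => by simp [nim] at h
  · obtain ⟨k, hk, rfl⟩ := mem_options_nim.1 hx
    interval_cases k
    · exact ⟨_, add_mem_options_add_left (nim_mem_options_nim (by norm_num)) _,
        nim_one_add_nim_one_indist.symm⟩
    · exact ⟨add (nim 0) (nim 1), add_mem_options_add_left (nim_mem_options_nim (by norm_num)) _,
        by simpa using .refl _⟩
  · simp only [mem_options_add, mem_options_nim] at hy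
    rcases hy with ⟨_, ⟨k, hk, rfl⟩, rfl⟩ | ⟨_, ⟨k, hk, rfl⟩, rfl⟩ <;> interval_cases k
    · exact .inl ⟨nim 1, nim_mem_options_nim (by norm_num), by simpa using .refl _⟩
    · exact .inl ⟨nim 0, nim_mem_options_nim (by norm_num), nim_one_add_nim_one_indist.symm⟩
    · exact .inr ⟨_, add_mem_options_add_right _ (nim_mem_options_nim one_pos),
        by simpa using .refl _⟩
    · exact .inr ⟨nim 2, by simpa using nim_mem_options_nim (by norm_num), .refl _⟩

theorem nim_three_indist_nim_one_add_nim_two : Indist (nim 3) (add (nim 1) (nim 2)) := by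
  refine indist_of_reversible (fun x hx => ?_) (fun y hy => .inl ?_) fun h => by simp [nim] at h
  · obtain ⟨k, hk, rfl⟩ := mem_options_nim.1 hx
    interval_cases k
    · exact ⟨_, add_mem_options_add_right _ (nim_mem_options_nim one_lt_two),
        nim_one_add_nim_one_indist.symm⟩
    · exact ⟨_, add_mem_options_add_right _ (nim_mem_options_nim two_pos), by simpa using .refl _⟩
    · exact ⟨_, add_mem_options_add_left (nim_mem_options_nim one_pos) _, by simpa using .refl _⟩
  · simp only [mem_options_add, mem_options_nim] at hy
    rcases hy with ⟨_, ⟨k, hk, rfl⟩, rfl⟩ | ⟨_, ⟨k, hk, rfl⟩, rfl⟩ <;> interval_cases k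
    · exact ⟨nim 2, nim_mem_options_nim (by norm_num), by simpa using .refl _⟩
    · exact ⟨nim 1, nim_mem_options_nim (by norm_num), by simpa using .refl _⟩
    · exact ⟨nim 0, nim_mem_options_nim (by norm_num), nim_one_add_nim_one_indist.symm⟩

theorem node_nim_three_node_nim_two_indist :
    Indist (node [nim 3, node [nim 2]]) (add (nim 1) (node [nim 2])) := by
  refine indist_of_reversible (fun x hx => ?_) (fun y hy => .inl ?_) fun h => by simp at h
  · simp only [options_node, List.mem_cons, List.not_mem_nil, or_false] at hx
    rcases hx with rfl | rfl
    · exact ⟨_, add_mem_options_add_right _ (by simp), nim_three_indist_nim_one_add_nim_two⟩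
    · exact ⟨_, add_mem_options_add_left (nim_mem_options_nim one_pos) _, by simpa using .refl _⟩
  · simp only [mem_options_add, mem_options_nim, options_node, List.mem_singleton] at hy
    rcases hy with ⟨_, ⟨k, hk, rfl⟩, rfl⟩ | ⟨_, rfl, rfl⟩
    · interval_cases k
      exact ⟨node [nim 2], by simp, by simpa using .refl _⟩
    · exact ⟨nim 3, by simp, nim_three_indist_nim_one_add_nim_two⟩

end Game

open Game in
/-- The game `{*3; {*2}}` is misère-indistinguishable from
`nim 1 + {*2}`; consequently `nim 3 + {*3; {*2}}` is
misère-indistinguishable from `nim 2 + {*2}`. -/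
theorem stmt15 :
    Indist (Game.node [nim 3, Game.node [nim 2]]) (add (nim 1) (Game.node [nim 2])) ∧
    Indist (add (nim 3) (Game.node [nim 3, Game.node [nim 2]]))
           (add (nim 2) (Game.node [nim 2])) := by
  have h : Indist (add (nim 3) (node [nim 3, node [nim 2]]))
      (add (add (nim 3) (nim 1)) (node [nim 2])) := by
    simpa only [add_assoc] using node_nim_three_node_nim_two_indist.add_left (nim 3)
  exact ⟨node_nim_three_node_nim_two_indist, h.trans (nim_three_add_nim_one_indist.add_right _)⟩
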